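/- Let A be a closed module homomorphism on a complete RN module X and {V(s) : s ≥ 0} a mild C-existence family for A. If for some z ∈ X the map s ↦ V(s)z is differentiable at s = s₀, then V(s₀)z ∈ D(A) and A V(s₀)z = (d/ds) V(s)z |_{s=s₀}. -/

import Mathlib

open MeasureTheory Filter Set
noncomputable section

/-- A random normed module (RN module) over ℝ with base `(Ω, F, P)`:
an `L⁰(F,ℝ)`-module `X` together with an `L⁰`-norm. The `L⁰(F,ℝ)`-scalar
multiplication is bundled as the field `smul`. -/
structure RNModuleStr {Ω : Type*} [MeasurableSpace Ω] (P : Measure Ω)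
    (X : Type*) [AddCommGroup X] where
  smul : (Ω →ₘ[P] ℝ) → X → X
  nrm : X → Ω →ₘ[P] ℝ
  one_smul' : ∀ x, smul 1 x = x
  mul_smul' : ∀ ξ η x, smul (ξ * η) x = smul ξ (smul η x)
  smul_add' : ∀ ξ x y, smul ξ (x + y) = smul ξ x + smul ξ y
  add_smul' : ∀ ξ η x, smul (ξ + η) x = smul ξ x + smul η x
  nrm_nonneg : ∀ x, 0 ≤ nrm x
  nrm_smul : ∀ ξ x, nrm (smul ξ x) = |ξ| * nrm x
  nrm_add_le : ∀ x y, nrm (x + y) ≤ nrm x + nrm y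
  nrm_eq_zero : ∀ x, nrm x = 0 → x = 0

namespace RNModuleStr

variable {Ω : Type*} [MeasurableSpace Ω] {P : Measure Ω} {X : Type*} [AddCommGroup X]

/-- Scalar multiplication by a real constant (viewed as a constant random variable). -/
def rsmul (M : RNModuleStr P X) (c : ℝ) (x : X) : X :=
  M.smul (AEEqFun.const Ω c) x

/-- Convergence in the `(ε,λ)`-topology of an RN module, i.e. convergence in
probability of the `L⁰`-norms of the differences, along an arbitrary filter. -/
def TendstoRN (M : RNModuleStr P X) {ι : Type*} (f : ι → X) (l : Filter ι) (x : X) : Prop :=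
  ∀ ε : ℝ, 0 < ε → Tendsto (fun i => P {ω : Ω | ε ≤ M.nrm (f i - x) ω}) l (nhds 0)

/-- Sequential continuity of a map between RN modules; in the metrizable
`(ε,λ)`-topology this is equivalent to continuity. -/
def RNContinuousMap {Y : Type*} [AddCommGroup Y] (M : RNModuleStr P X)
    (N : RNModuleStr P Y) (T : X → Y) : Prop :=
  ∀ (u : ℕ → X) (x : X), M.TendstoRN u atTop x → N.TendstoRN (fun n => T (u n)) atTop (T x)

/-- `T : X → Y` is a module homomorphism of `L⁰`-modules. -/
def IsModuleHom {Y : Type*} [AddCommGroup Y] (M : RNModuleStr P X)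
    (N : RNModuleStr P Y) (T : X → Y) : Prop :=
  (∀ x y : X, T (x + y) = T x + T y) ∧ ∀ (ξ : Ω →ₘ[P] ℝ) (x : X), T (M.smul ξ x) = N.smul ξ (T x)

/-- `T` is almost surely bounded: `‖Tz‖ ≤ η ‖z‖` for some `η ∈ L⁰₊`. -/
def ASBounded {Y : Type*} [AddCommGroup Y] (M : RNModuleStr P X)
    (N : RNModuleStr P Y) (T : X → Y) : Prop :=
  ∃ η : Ω →ₘ[P] ℝ, 0 ≤ η ∧ ∀ x : X, N.nrm (T x) ≤ η * M.nrm x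

/-- Riemann sum over the uniform partition of `[a,b]` into `n` pieces. -/
def rsum (M : RNModuleStr P X) (f : ℝ → X) (a b : ℝ) (n : ℕ) : X :=
  ∑ i ∈ Finset.range n, M.rsmul ((b - a) / n) (f (a + (b - a) * i / n))

/-- `y` is the Riemann integral `∫ₐᵇ f(u) du` in the complete RN module `X`
(limit in the `(ε,λ)`-topology of the uniform Riemann sums). -/
def IsIntegral (M : RNModuleStr P X) (f : ℝ → X) (a b : ℝ) (y : X) : Prop :=
  M.TendstoRN (fun n => M.rsum f a b n) atTop y

/-- The family `{V(s) : s ≥ 0}` is locally a.s. bounded: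
`⋁_{s∈[0,l]} ‖V(s)‖ ∈ L⁰₊(F)` for every `l > 0`. -/
def LocASBounded (M : RNModuleStr P X) (V : ℝ → X → X) : Prop :=
  ∀ l : ℝ, 0 < l → ∃ η : Ω →ₘ[P] ℝ, 0 ≤ η ∧
    ∀ s ∈ Icc (0:ℝ) l, ∀ x : X, M.nrm (V s x) ≤ η * M.nrm x

/-- `{V(s) : s ≥ 0}` is a `C`-semigroup on the RN module `X`. -/
structure IsCSemigroup (M : RNModuleStr P X) (V : ℝ → X → X) (C : X → X) : Prop where
  C_hom : M.IsModuleHom M C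
  C_bdd : ASBounded M M C
  C_inj : Function.Injective C
  V_hom : ∀ s : ℝ, 0 ≤ s → M.IsModuleHom M (V s)
  V_bdd : ∀ s : ℝ, 0 ≤ s → ASBounded M M (V s)
  strong_cont : ∀ (z : X) (t : ℝ), 0 ≤ t →
    M.TendstoRN (fun s => V s z) (nhdsWithin t (Ici 0)) (V t z)
  V_zero : V 0 = C
  C_V : ∀ s t : ℝ, 0 ≤ s → 0 ≤ t → ∀ z : X, C (V (s + t) z) = V s (V t z)

/-- `(A, DA)` is the generator of the `C`-semigroup `{V(s) : s ≥ 0}`: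
`DA = {z : lim_{s↓0} (V(s)z - Cz)/s exists and lies in R(C)}` and
`Az = C⁻¹ lim_{s↓0} (V(s)z - Cz)/s`. -/
structure IsGenerator (M : RNModuleStr P X) (V : ℝ → X → X) (C : X → X)
    (DA : Set X) (A : X → X) : Prop where
  mem_iff : ∀ z : X, z ∈ DA ↔ ∃ w : X,
    M.TendstoRN (fun s => M.rsmul s⁻¹ (V s z - C z)) (nhdsWithin 0 (Ioi 0)) (C w)
  spec : ∀ z ∈ DA,
    M.TendstoRN (fun s => M.rsmul s⁻¹ (V s z - C z)) (nhdsWithin 0 (Ioi 0)) (C (A z))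

/-- `{V(s) : s ≥ 0}` is a mild `C`-existence family for the module homomorphism
`A` with domain `DA`. -/
structure IsMildCExistenceFamily (M : RNModuleStr P X) (V : ℝ → X → X) (C : X → X)
    (DA : Set X) (A : X → X) : Prop where
  V_hom : ∀ s : ℝ, 0 ≤ s → M.IsModuleHom M (V s)
  locBdd : M.LocASBounded V
  strong_cont : ∀ (z : X) (t : ℝ), 0 ≤ t →
    M.TendstoRN (fun s => V s z) (nhdsWithin t (Ici 0)) (V t z)
  integral_mem : ∀ (z : X) (s : ℝ), 0 ≤ s → ∃ y : X,
    M.IsIntegral (fun u => V u z) 0 s y ∧ y ∈ DA ∧ A y = V s z - C z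

/-- `A` (with domain `DA`) is a closed module homomorphism: its graph is closed
in the `(ε,λ)`-topology. -/
def IsClosedOperator (M : RNModuleStr P X) (DA : Set X) (A : X → X) : Prop :=
  ∀ (u : ℕ → X) (z y : X), (∀ n, u n ∈ DA) →
    M.TendstoRN u atTop z → M.TendstoRN (fun n => A (u n)) atTop y →
    z ∈ DA ∧ A z = y

end RNModuleStr

open RNModuleStr

/-!
Let `y s = ∫₀ˢ V(u)z du`. Since `A` is additive on `D(A)` and the identity at `s = 0` forces
`C = V 0`, the difference quotients `uₙ = hₙ⁻¹ (y (s₀ + hₙ) - y s₀)` lie in `D(A)` with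
`A uₙ = hₙ⁻¹ (V (s₀ + hₙ) z - V s₀ z)`, which tends to `w` by differentiability.
Choosing `hₙ` so that `s₀` is an integer multiple of `hₙ`, the uniform Riemann sums on `[0, s₀]`
and `[0, s₀ + hₙ]` share their nodes, so `uₙ` is the limit of averages of `V(·)z` at equally
spaced points of `[s₀, s₀ + hₙ]`. The local a.s. bound and the continuity in probability at `s₀`
make such averages close to `V s₀ z` in probability, uniformly in the number of points (Markov's
inequality after truncating at a level where the bound is rarely exceeded). Hence `uₙ → V s₀ z`,
and closedness of `A` gives the claim.
-/

open scoped ENNReal Topology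

section Markov

variable {Ω : Type*} [MeasurableSpace Ω] {μ : Measure Ω}

theorem tendsto_measure_setOf_le_atTop [IsFiniteMeasure μ] {G : Ω → ℝ} (hG : Measurable G) :
    Tendsto (fun K : ℝ => μ {ω | K ≤ G ω}) atTop (𝓝 0) := by
  have h := tendsto_measure_iInter_atTop (μ := μ) (s := fun K : ℝ => {ω | K ≤ G ω})
    (fun K => (measurableSet_le measurable_const hG).nullMeasurableSet)
    (fun _ _ hKL _ hω => hKL.trans hω) ⟨0, measure_ne_top μ _⟩
  have hempty : ⋂ K : ℝ, {ω | K ≤ G ω} = ∅ :=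
    iInter_eq_empty_iff.mpr fun ω => ⟨G ω + 1, by simp⟩
  rwa [hempty, measure_empty] at h

theorem lintegral_ofReal_min_le [IsProbabilityMeasure μ] (g : Ω → ℝ) (δ K : ℝ) :
    ∫⁻ ω, ENNReal.ofReal (min (g ω) K) ∂μ ≤
      ENNReal.ofReal δ + ENNReal.ofReal K * μ {ω | δ ≤ g ω} := by
  have hpt : ∀ ω, ENNReal.ofReal (min (g ω) K) ≤
      ENNReal.ofReal δ + {ω | δ ≤ g ω}.indicator (fun _ => ENNReal.ofReal K) ω := fun ω => by
    by_cases hω : δ ≤ g ω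
    · rw [indicator_of_mem (s := {ω | δ ≤ g ω}) hω]
      exact (ENNReal.ofReal_le_ofReal (min_le_right _ _)).trans le_add_self
    · rw [indicator_of_notMem (s := {ω | δ ≤ g ω}) hω, add_zero]
      exact ENNReal.ofReal_le_ofReal ((min_le_left _ _).trans (not_le.mp hω).le)
  calc ∫⁻ ω, ENNReal.ofReal (min (g ω) K) ∂μ
      ≤ ∫⁻ ω, (ENNReal.ofReal δ + {ω | δ ≤ g ω}.indicator (fun _ => ENNReal.ofReal K) ω) ∂μ :=
        lintegral_mono hpt
    _ = ENNReal.ofReal δ + ∫⁻ ω, {ω | δ ≤ g ω}.indicator (fun _ => ENNReal.ofReal K) ω ∂μ := by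
        rw [lintegral_add_left measurable_const, lintegral_const, measure_univ, mul_one]
    _ ≤ _ := by gcongr; exact lintegral_indicator_const_le _ _

/-- Markov's inequality for the average of the `g j` truncated at `K`, which is the average
itself off `{K ≤ G}`. -/
theorem measure_le_average_le [IsProbabilityMeasure μ] {k : ℕ} {g : ℕ → Ω → ℝ} {G : Ω → ℝ}
    (hg : ∀ j, Measurable (g j)) (hgG : ∀ᵐ ω ∂μ, ∀ j ∈ Finset.range k, g j ω ≤ G ω)
    {ε δ K : ℝ} (hε : 0 < ε) {κ b : ℝ≥0∞} (hκ : ∀ j ∈ Finset.range k, μ {ω | δ ≤ g j ω} ≤ κ)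
    (hb : ENNReal.ofReal δ + ENNReal.ofReal K * κ ≤ b * ENNReal.ofReal ε) :
    μ {ω | ε ≤ (k : ℝ)⁻¹ * ∑ j ∈ Finset.range k, g j ω} ≤ μ {ω | K ≤ G ω} + b := by
  set F : Ω → ℝ≥0∞ := fun ω =>
    ENNReal.ofReal (k : ℝ)⁻¹ * ∑ j ∈ Finset.range k, ENNReal.ofReal (min (g j ω) K)
  have hF : Measurable F := by fun_prop
  have hsplit : {ω | ε ≤ (k : ℝ)⁻¹ * ∑ j ∈ Finset.range k, g j ω} ≤ᵐ[μ]
      ({ω | K ≤ G ω} ∪ {ω | ENNReal.ofReal ε ≤ F ω} : Set Ω) := by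
    filter_upwards [hgG] with ω hω (hε' : ε ≤ _)
    by_cases hK : K ≤ G ω
    · exact Or.inl hK
    refine Or.inr (le_trans (ENNReal.ofReal_le_ofReal hε') ?_)
    rw [ENNReal.ofReal_mul (by positivity)]
    refine mul_le_mul_right ((Finset.le_sum_of_subadditive _ ENNReal.ofReal_zero.le
      (fun _ _ => ENNReal.ofReal_add_le) _ _).trans (Finset.sum_le_sum fun j hj => ?_)) _
    rw [min_eq_left ((hω j hj).trans (not_le.mp hK).le)]
  have hint : ∫⁻ ω, F ω ∂μ ≤ ENNReal.ofReal δ + ENNReal.ofReal K * κ := by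
    rw [lintegral_const_mul' _ _ ENNReal.ofReal_ne_top,
      lintegral_finsetSum _ fun j _ => by fun_prop]
    calc ENNReal.ofReal (k : ℝ)⁻¹ *
          ∑ j ∈ Finset.range k, ∫⁻ ω, ENNReal.ofReal (min (g j ω) K) ∂μ
        ≤ ENNReal.ofReal (k : ℝ)⁻¹ *
          ∑ _j ∈ Finset.range k, (ENNReal.ofReal δ + ENNReal.ofReal K * κ) := by
          gcongr with j hj
          refine (lintegral_ofReal_min_le _ δ K).trans ?_
          gcongr
          exact hκ j hj
      _ ≤ ENNReal.ofReal δ + ENNReal.ofReal K * κ := by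
          rcases eq_or_ne k 0 with rfl | hk
          · simp
          rw [Finset.sum_const, Finset.card_range, nsmul_eq_mul, ← mul_assoc,
            ENNReal.ofReal_inv_of_pos (by positivity), ENNReal.ofReal_natCast,
            ENNReal.inv_mul_cancel (by exact_mod_cast hk) (ENNReal.natCast_ne_top k), one_mul]
  calc μ {ω | ε ≤ (k : ℝ)⁻¹ * ∑ j ∈ Finset.range k, g j ω}
      ≤ μ {ω | K ≤ G ω} + μ {ω | ENNReal.ofReal ε ≤ F ω} :=
        (measure_mono_ae hsplit).trans (measure_union_le _ _)
    _ ≤ μ {ω | K ≤ G ω} + (∫⁻ ω, F ω ∂μ) / ENNReal.ofReal ε :=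
        add_le_add le_rfl (meas_ge_le_lintegral_div hF.aemeasurable
          (ENNReal.ofReal_pos.mpr hε).ne' ENNReal.ofReal_ne_top)
    _ ≤ μ {ω | K ≤ G ω} + b := add_le_add le_rfl (ENNReal.div_le_of_le_mul (hint.trans hb))

end Markov

lemma exists_seq_pos_nat_mul_eq {s : ℝ} (hs : 0 ≤ s) :
    ∃ (h : ℕ → ℝ) (p : ℕ → ℕ), (∀ n, 0 < h n) ∧ Tendsto h atTop (𝓝 0) ∧
      ∀ n, (p n : ℝ) * h n = s := by
  rcases hs.eq_or_lt with rfl | hs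
  · exact ⟨fun n => 1 / ((n : ℝ) + 1), fun _ => 0, fun _ => Nat.one_div_pos_of_nat,
      tendsto_one_div_add_atTop_nhds_zero_nat, fun _ => by simp⟩
  · refine ⟨fun n => s * (1 / ((n : ℝ) + 1)), fun n => n + 1, fun _ => by positivity,
      by simpa using tendsto_one_div_add_atTop_nhds_zero_nat.const_mul s, fun n => ?_⟩
    push_cast
    field_simp

namespace RNModuleStr

variable {Ω : Type*} [MeasurableSpace Ω] {P : Measure Ω} {X : Type*} [AddCommGroup X]
  (M : RNModuleStr P X)

section Algebra

def smulAddHom (ξ : Ω →ₘ[P] ℝ) : X →+ X :=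
  AddMonoidHom.mk' (M.smul ξ) (M.smul_add' ξ)

def smulLeftAddHom (x : X) : (Ω →ₘ[P] ℝ) →+ X :=
  AddMonoidHom.mk' (M.smul · x) (M.add_smul' · · x)

lemma zero_rsmul (x : X) : M.rsmul 0 x = 0 :=
  map_zero (M.smulLeftAddHom x)

lemma one_rsmul (x : X) : M.rsmul 1 x = x :=
  M.one_smul' x

lemma neg_rsmul (c : ℝ) (x : X) : M.rsmul (-c) x = -M.rsmul c x :=
  map_neg (M.smulLeftAddHom x) (AEEqFun.const Ω c)

lemma add_rsmul (a b : ℝ) (x : X) : M.rsmul (a + b) x = M.rsmul a x + M.rsmul b x :=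
  M.add_smul' (AEEqFun.const Ω a) (AEEqFun.const Ω b) x

lemma rsmul_rsmul (a b : ℝ) (x : X) : M.rsmul a (M.rsmul b x) = M.rsmul (a * b) x :=
  (M.mul_smul' _ _ x).symm

lemma rsmul_zero (c : ℝ) : M.rsmul c (0 : X) = 0 :=
  map_zero (M.smulAddHom _)

lemma rsmul_sub (c : ℝ) (x y : X) : M.rsmul c (x - y) = M.rsmul c x - M.rsmul c y :=
  map_sub (M.smulAddHom _) x y

lemma rsmul_sum {ι : Type*} (c : ℝ) (s : Finset ι) (f : ι → X) :
    M.rsmul c (∑ i ∈ s, f i) = ∑ i ∈ s, M.rsmul c (f i) :=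
  map_sum (M.smulAddHom _) f s

lemma natCast_rsmul (n : ℕ) (x : X) : M.rsmul n x = n • x := by
  induction n with
  | zero => simpa using M.zero_rsmul x
  | succ n ih => rw [Nat.cast_succ, M.add_rsmul, ih, M.one_rsmul, succ_nsmul]

lemma inv_natCast_rsmul_nsmul {n : ℕ} (hn : n ≠ 0) (x : X) : M.rsmul (n : ℝ)⁻¹ (n • x) = x := by
  rw [← M.natCast_rsmul, M.rsmul_rsmul, inv_mul_cancel₀ (Nat.cast_ne_zero.mpr hn), M.one_rsmul]

end Algebra

section Norm

lemma nrm_rsmul (c : ℝ) (x : X) : M.nrm (M.rsmul c x) = AEEqFun.const Ω |c| * M.nrm x :=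
  M.nrm_smul _ x

lemma nrm_neg (x : X) : M.nrm (-x) = M.nrm x := by
  have h := M.nrm_rsmul (-1) x
  rwa [M.neg_rsmul, M.one_rsmul, abs_neg, abs_one, show AEEqFun.const Ω (1 : ℝ) = 1 from rfl,
    one_mul] at h

lemma ae_nrm_rsmul (c : ℝ) (x : X) : ∀ᵐ ω ∂P, M.nrm (M.rsmul c x) ω = |c| * M.nrm x ω := by
  rw [nrm_rsmul]
  filter_upwards [AEEqFun.coeFn_mul (AEEqFun.const Ω |c|) (M.nrm x),
    AEEqFun.coeFn_const (μ := P) Ω |c|] with ω h₁ h₂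
  simp [h₁, h₂]

lemma ae_nrm_add (x y : X) : ∀ᵐ ω ∂P, M.nrm (x + y) ω ≤ M.nrm x ω + M.nrm y ω := by
  filter_upwards [AEEqFun.coeFn_le.mpr (M.nrm_add_le x y),
    AEEqFun.coeFn_add (M.nrm x) (M.nrm y)] with ω h₁ h₂
  simpa [h₂] using h₁

lemma ae_nrm_sub (x y : X) : ∀ᵐ ω ∂P, M.nrm (x - y) ω ≤ M.nrm x ω + M.nrm y ω := by
  simpa [← sub_eq_add_neg, M.nrm_neg] using M.ae_nrm_add x (-y)

lemma ae_nrm_sub_le_add {x y : X} {G H : Ω →ₘ[P] ℝ} (hx : M.nrm x ≤ G) (hy : M.nrm y ≤ H) :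
    ∀ᵐ ω ∂P, M.nrm (x - y) ω ≤ G ω + H ω := by
  filter_upwards [M.ae_nrm_sub x y, AEEqFun.coeFn_le.mpr hx, AEEqFun.coeFn_le.mpr hy]
    with ω h₁ h₂ h₃
  linarith

lemma ae_nrm_sum {ι : Type*} (s : Finset ι) (f : ι → X) :
    ∀ᵐ ω ∂P, M.nrm (∑ i ∈ s, f i) ω ≤ ∑ i ∈ s, M.nrm (f i) ω := by
  classical
  induction s using Finset.induction_on with
  | empty =>
    filter_upwards [M.ae_nrm_rsmul 0 0] with ω h
    simpa [M.rsmul_zero] using h.le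
  | insert a s ha ih =>
    filter_upwards [ih, M.ae_nrm_add (f a) (∑ i ∈ s, f i)] with ω h₁ h₂
    rw [Finset.sum_insert ha, Finset.sum_insert ha]
    linarith

lemma ae_nrm_average_sub_le {k : ℕ} (hk : k ≠ 0) (x : ℕ → X) (y : X) :
    ∀ᵐ ω ∂P, M.nrm (M.rsmul (k : ℝ)⁻¹ (∑ j ∈ Finset.range k, x j) - y) ω ≤
      (k : ℝ)⁻¹ * ∑ j ∈ Finset.range k, M.nrm (x j - y) ω := by
  have hsum : M.rsmul (k : ℝ)⁻¹ (∑ j ∈ Finset.range k, x j) - y =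
      M.rsmul (k : ℝ)⁻¹ (∑ j ∈ Finset.range k, (x j - y)) := by
    rw [Finset.sum_sub_distrib, Finset.sum_const, Finset.card_range, M.rsmul_sub,
      M.inv_natCast_rsmul_nsmul hk]
  rw [hsum]
  filter_upwards [M.ae_nrm_rsmul _ _, M.ae_nrm_sum (Finset.range k) _] with ω h₁ h₂
  rw [h₁, abs_of_nonneg (by positivity)]
  gcongr

lemma measure_nrm_sub_le (x y : X) (ε₁ ε₂ : ℝ) :
    P {ω | ε₁ + ε₂ ≤ M.nrm (x - y) ω} ≤ P {ω | ε₁ ≤ M.nrm x ω} + P {ω | ε₂ ≤ M.nrm y ω} := by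
  refine (measure_mono_ae ?_).trans (measure_union_le _ _)
  filter_upwards [M.ae_nrm_sub x y] with ω h (hω : ε₁ + ε₂ ≤ _)
  by_cases h₁ : ε₁ ≤ M.nrm x ω
  · exact Or.inl h₁
  · exact Or.inr (show ε₂ ≤ M.nrm y ω by linarith)

lemma eq_zero_of_forall_measure_nrm_eq_zero {x : X}
    (h : ∀ ε : ℝ, 0 < ε → P {ω | ε ≤ M.nrm x ω} = 0) : x = 0 := by
  have hsmall : ∀ᵐ ω ∂P, ∀ n : ℕ, M.nrm x ω < 1 / ((n : ℝ) + 1) := by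
    rw [ae_all_iff]
    intro n
    simpa [ae_iff] using h _ Nat.one_div_pos_of_nat
  refine M.nrm_eq_zero x (AEEqFun.ext ?_)
  filter_upwards [hsmall, AEEqFun.coeFn_le.mpr (M.nrm_nonneg x),
    (AEEqFun.coeFn_zero : ⇑(0 : Ω →ₘ[P] ℝ) =ᵐ[P] 0)] with ω h₁ h₂ h₃
  rw [h₃] at h₂ ⊢
  exact le_antisymm (ge_of_tendsto' tendsto_one_div_add_atTop_nhds_zero_nat
    fun n => (h₁ n).le) h₂

end Norm

section Convergence

variable {ι : Type*} {l : Filter ι} {f g : ι → X} {x y : X}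

lemma tendstoRN_congr (h : ∀ᶠ i in l, f i = g i) (hf : M.TendstoRN f l x) :
    M.TendstoRN g l x := fun ε hε =>
  (hf ε hε).congr' (h.mono fun i hi => by rw [hi])

lemma tendstoRN_comp {κ : Type*} {l' : Filter κ} {φ : κ → ι} (hf : M.TendstoRN f l x)
    (hφ : Tendsto φ l' l) : M.TendstoRN (fun j => f (φ j)) l' x := fun ε hε =>
  (hf ε hε).comp hφ

lemma tendstoRN_mono {l' : Filter ι} (hf : M.TendstoRN f l x) (hl : l' ≤ l) :
    M.TendstoRN f l' x := fun ε hε =>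
  (hf ε hε).mono_left hl

lemma tendstoRN_sub (hf : M.TendstoRN f l x) (hg : M.TendstoRN g l y) :
    M.TendstoRN (fun i => f i - g i) l (x - y) := by
  intro ε hε
  have hle : ∀ i, P {ω | ε ≤ M.nrm (f i - g i - (x - y)) ω} ≤
      P {ω | ε / 2 ≤ M.nrm (f i - x) ω} + P {ω | ε / 2 ≤ M.nrm (g i - y) ω} := fun i => by
    rw [show f i - g i - (x - y) = (f i - x) - (g i - y) by abel]
    simpa using M.measure_nrm_sub_le (f i - x) (g i - y) (ε / 2) (ε / 2)
  refine tendsto_of_tendsto_of_tendsto_of_le_of_le tendsto_const_nhds ?_ (fun _ => zero_le) hle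
  simpa using (hf _ (half_pos hε)).add (hg _ (half_pos hε))

lemma tendstoRN_rsmul (c : ℝ) (hf : M.TendstoRN f l x) :
    M.TendstoRN (fun i => M.rsmul c (f i)) l (M.rsmul c x) := by
  intro ε hε
  have hc : 0 < |c| + 1 := by positivity
  have hle : ∀ i, P {ω | ε ≤ M.nrm (M.rsmul c (f i) - M.rsmul c x) ω} ≤
      P {ω | ε / (|c| + 1) ≤ M.nrm (f i - x) ω} := fun i => by
    rw [← M.rsmul_sub]
    refine measure_mono_ae ?_
    filter_upwards [M.ae_nrm_rsmul c (f i - x)] with ω h (hω : ε ≤ _)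
    rw [h] at hω
    show ε / (|c| + 1) ≤ _
    rw [div_le_iff₀ hc]
    nlinarith [abs_nonneg c]
  exact tendsto_of_tendsto_of_tendsto_of_le_of_le tendsto_const_nhds (hf _ (by positivity))
    (fun _ => zero_le) hle

lemma tendstoRN_unique [l.NeBot] (hx : M.TendstoRN f l x) (hy : M.TendstoRN f l y) :
    x = y := by
  refine sub_eq_zero.mp (M.eq_zero_of_forall_measure_nrm_eq_zero fun ε hε => ?_)
  have hle : ∀ i, P {ω | ε ≤ M.nrm (x - y) ω} ≤
      P {ω | ε / 2 ≤ M.nrm (f i - y) ω} + P {ω | ε / 2 ≤ M.nrm (f i - x) ω} := fun i => by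
    rw [show x - y = (f i - y) - (f i - x) by abel]
    simpa using M.measure_nrm_sub_le (f i - y) (f i - x) (ε / 2) (ε / 2)
  have hlim := (hy _ (half_pos hε)).add (hx _ (half_pos hε))
  rw [add_zero] at hlim
  exact le_antisymm (ge_of_tendsto hlim (Eventually.of_forall hle)) zero_le

lemma measure_le_of_tendstoRN {g : ℕ → X} (hg : M.TendstoRN g atTop x) {ε₁ ε₂ : ℝ}
    (hε₂ : 0 < ε₂) {a : ℝ≥0∞} (ha : ∀ᶠ m in atTop, P {ω | ε₁ ≤ M.nrm (g m - y) ω} ≤ a) :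
    P {ω | ε₁ + ε₂ ≤ M.nrm (x - y) ω} ≤ a := by
  have hle : ∀ᶠ m in atTop, P {ω | ε₁ + ε₂ ≤ M.nrm (x - y) ω} ≤
      a + P {ω | ε₂ ≤ M.nrm (g m - x) ω} := ha.mono fun m hm => by
    rw [show x - y = (g m - y) - (g m - x) by abel]
    exact (M.measure_nrm_sub_le _ _ _ _).trans (add_le_add_left hm _)
  simpa using ge_of_tendsto (tendsto_const_nhds.add (hg ε₂ hε₂)) hle

end Convergence

section Integral

variable {M} {f g : ℝ → X} {a b : ℝ} {y : X}

lemma IsIntegral.unique {y' : X} (hy : M.IsIntegral f a b y) (hy' : M.IsIntegral f a b y') :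
    y = y' :=
  M.tendstoRN_unique hy hy'

lemma IsIntegral.eq_zero (hy : M.IsIntegral f a a y) : y = 0 := by
  have hrsum : ∀ n, M.rsum f a a n = 0 := fun n => by
    simp [rsum, M.zero_rsmul]
  refine M.eq_zero_of_forall_measure_nrm_eq_zero fun ε hε => ?_
  have h := hy ε hε
  simp only [hrsum, zero_sub, M.nrm_neg] at h
  exact tendsto_nhds_unique tendsto_const_nhds h

lemma IsIntegral.congr (hab : a ≤ b) (hfg : EqOn f g (Icc a b)) (hf : M.IsIntegral f a b y) :
    M.IsIntegral g a b y := by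
  refine M.tendstoRN_congr (Eventually.of_forall fun n => ?_) hf
  refine Finset.sum_congr rfl fun i hi => ?_
  have hin : (i : ℝ) ≤ n := by exact_mod_cast (Finset.mem_range.mp hi).le
  have hpos : (0 : ℝ) < n := by exact_mod_cast (Finset.mem_range.mp hi).trans_le' (Nat.zero_le i)
  rw [hfg ⟨?_, ?_⟩]
  · have : 0 ≤ (b - a) * i / n := by have := sub_nonneg.mpr hab; positivity
    linarith
  · have : (b - a) * i / n ≤ b - a := by
      rw [div_le_iff₀ hpos]
      exact mul_le_mul_of_nonneg_left hin (sub_nonneg.mpr hab)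
    linarith

lemma IsIntegral.rsmul (c : ℝ) (hf : M.IsIntegral f a b y) :
    M.IsIntegral (fun u => M.rsmul c (f u)) a b (M.rsmul c y) := by
  refine M.tendstoRN_congr (Eventually.of_forall fun n => ?_) (M.tendstoRN_rsmul c hf)
  simp only [rsum, M.rsmul_sum, M.rsmul_rsmul, mul_comm]

variable (M) in
lemma rsum_nat_mul (f : ℝ → X) (p k : ℕ) (h : ℝ) :
    M.rsum f 0 (p * h) (p * k) = ∑ i ∈ Finset.range (p * k), M.rsmul (h / k) (f (i * h / k)) := by
  refine Finset.sum_congr rfl fun i hi => ?_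
  obtain ⟨hp, hk⟩ := mul_ne_zero_iff.mp (Finset.mem_range.mp hi).ne_bot
  have hp : (p : ℝ) ≠ 0 := Nat.cast_ne_zero.mpr hp
  have hk : (k : ℝ) ≠ 0 := Nat.cast_ne_zero.mpr hk
  have hstep : ((p : ℝ) * h - 0) / ((p * k : ℕ) : ℝ) = h / k := by
    push_cast; field_simp; ring
  have hnode : 0 + ((p : ℝ) * h - 0) * i / ((p * k : ℕ) : ℝ) = i * h / k := by
    push_cast; field_simp; ring
  rw [hstep, hnode]

variable (M) in
lemma rsum_succ_nat_mul_sub (f : ℝ → X) (p k : ℕ) (h : ℝ) :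
    M.rsum f 0 ((p + 1 : ℕ) * h) ((p + 1) * k) - M.rsum f 0 (p * h) (p * k) =
      ∑ j ∈ Finset.range k, M.rsmul (h / k) (f (p * h + j * h / k)) := by
  rw [M.rsum_nat_mul, M.rsum_nat_mul, add_mul, one_mul, Finset.sum_range_add, add_sub_cancel_left]
  refine Finset.sum_congr rfl fun j hj => ?_
  have hk : (k : ℝ) ≠ 0 := Nat.cast_ne_zero.mpr (Finset.mem_range.mp hj).ne_bot
  push_cast
  congr 2
  field_simp

lemma IsIntegral.tendstoRN_rsum_nat_mul {p : ℕ} {h : ℝ} (hy : M.IsIntegral f 0 (p * h) y) :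
    M.TendstoRN (fun k => M.rsum f 0 (p * h) (p * k)) atTop y := by
  rcases eq_or_ne p 0 with rfl | hp
  · refine M.tendstoRN_congr (Eventually.of_forall fun k => ?_) hy
    simp [rsum, M.zero_rsmul]
  · exact M.tendstoRN_comp hy (tendsto_id.const_mul_atTop' (Nat.pos_of_ne_zero hp))

lemma IsIntegral.tendstoRN_average {p : ℕ} {h : ℝ} (hh : h ≠ 0) {y₀ y₁ : X}
    (hy₀ : M.IsIntegral f 0 (p * h) y₀) (hy₁ : M.IsIntegral f 0 ((p + 1 : ℕ) * h) y₁) :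
    M.TendstoRN (fun k : ℕ => M.rsmul (k : ℝ)⁻¹ (∑ j ∈ Finset.range k, f (p * h + j * h / k)))
      atTop (M.rsmul h⁻¹ (y₁ - y₀)) := by
  refine M.tendstoRN_congr (Eventually.of_forall fun k => ?_)
    (M.tendstoRN_rsmul h⁻¹ (M.tendstoRN_sub hy₁.tendstoRN_rsum_nat_mul hy₀.tendstoRN_rsum_nat_mul))
  simp only [M.rsum_succ_nat_mul_sub, M.rsmul_sum, M.rsmul_rsmul]
  congr 1
  ext j
  rw [inv_mul_eq_div, div_div_cancel_left' hh]

end Integral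

section Averages

variable [IsProbabilityMeasure P]

variable {f : ℝ → X} {s₀ : ℝ} {G : Ω →ₘ[P] ℝ}

lemma exists_measure_nrm_average_sub_le (hG : ∀ᶠ s in 𝓝[≥] s₀, M.nrm (f s) ≤ G)
    (hf : M.TendstoRN f (𝓝[≥] s₀) (f s₀)) {ε : ℝ} (hε : 0 < ε) {a : ℝ≥0∞} (ha : 0 < a) :
    ∃ v > s₀, ∀ k ≠ 0, ∀ t : ℕ → ℝ, (∀ j < k, t j ∈ Ico s₀ v) →
      P {ω | ε ≤ M.nrm (M.rsmul (k : ℝ)⁻¹ (∑ j ∈ Finset.range k, f (t j)) - f s₀) ω} ≤ a := by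
  have ha3 : 0 < a / 3 := ENNReal.div_pos ha.ne' (by norm_num)
  obtain ⟨K, hK⟩ := ((tendsto_measure_setOf_le_atTop (μ := P)
    (G.measurable.add G.measurable)).eventually_lt_const ha3).exists
  have hεa : 0 < a / 3 * ENNReal.ofReal ε :=
    ENNReal.mul_pos ha3.ne' (ENNReal.ofReal_pos.mpr hε).ne'
  obtain ⟨δ, -, hδ, hδa⟩ := ENNReal.lt_iff_exists_real_btwn.mp hεa
  set κ := a / 3 * ENNReal.ofReal ε / ENNReal.ofReal K
  have hκ : 0 < κ := ENNReal.div_pos hεa.ne' ENNReal.ofReal_ne_top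
  have hnear := hG.and ((ENNReal.tendsto_nhds_zero.mp (hf δ (ENNReal.ofReal_pos.mp hδ))) κ hκ)
  obtain ⟨v, hv, hvsub⟩ := mem_nhdsGE_iff_exists_Ico_subset.mp hnear
  refine ⟨v, hv, fun k hk t ht => ?_⟩
  have hbound : ∀ᵐ ω ∂P, ∀ j ∈ Finset.range k, M.nrm (f (t j) - f s₀) ω ≤ G ω + G ω :=
    (eventually_all_finset _).mpr fun j hj => M.ae_nrm_sub_le_add
      (hvsub (ht j (Finset.mem_range.mp hj))).1 (hvsub (left_mem_Ico.mpr hv)).1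
  calc P {ω | ε ≤ M.nrm (M.rsmul (k : ℝ)⁻¹ (∑ j ∈ Finset.range k, f (t j)) - f s₀) ω}
      ≤ P {ω | ε ≤ (k : ℝ)⁻¹ * ∑ j ∈ Finset.range k, M.nrm (f (t j) - f s₀) ω} :=
        measure_mono_ae ((M.ae_nrm_average_sub_le hk (fun j => f (t j)) (f s₀)).mono
          fun _ h hω => le_trans hω h)
    _ ≤ P {ω | K ≤ G ω + G ω} + (a / 3 + a / 3) :=
        measure_le_average_le (fun j => (M.nrm _).measurable) hbound hε
          (fun j hj => (hvsub (ht j (Finset.mem_range.mp hj))).2) (by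
            rw [add_mul]
            exact add_le_add hδa.le ENNReal.mul_div_le)
    _ ≤ a / 3 + (a / 3 + a / 3) := add_le_add hK.le le_rfl
    _ = a := by rw [← add_assoc, ENNReal.add_thirds]

lemma tendstoRN_of_tendstoRN_average (hG : ∀ᶠ s in 𝓝[≥] s₀, M.nrm (f s) ≤ G)
    (hf : M.TendstoRN f (𝓝[≥] s₀) (f s₀)) {h : ℕ → ℝ} (hpos : ∀ n, 0 < h n)
    (hlim : Tendsto h atTop (𝓝 0)) {u : ℕ → X}
    (hu : ∀ n, M.TendstoRN (fun k : ℕ =>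
      M.rsmul (k : ℝ)⁻¹ (∑ j ∈ Finset.range k, f (s₀ + j * h n / k))) atTop (u n)) :
    M.TendstoRN u atTop (f s₀) := by
  intro ε hε
  refine ENNReal.tendsto_nhds_zero.mpr fun a ha => ?_
  obtain ⟨v, hv, hest⟩ := M.exists_measure_nrm_average_sub_le hG hf (half_pos hε) ha
  filter_upwards [hlim.eventually_lt_const (sub_pos.mpr hv)] with n hn
  have hpt : ∀ k : ℕ, ∀ j < k, s₀ + j * h n / k ∈ Ico s₀ v := fun k j hj => by
    have hk : (0 : ℝ) < k := by exact_mod_cast hj.trans_le' (Nat.zero_le j)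
    have hle : (j : ℝ) * h n / k ≤ h n := by
      rw [div_le_iff₀ hk, mul_comm (h n)]
      exact mul_le_mul_of_nonneg_right (by exact_mod_cast hj.le) (hpos n).le
    constructor
    · have := hpos n; linarith [show 0 ≤ (j : ℝ) * h n / k by positivity]
    · linarith
  simpa using M.measure_le_of_tendstoRN (hu n) (half_pos hε)
    ((eventually_ne_atTop 0).mono fun k hk => hest k hk _ (hpt k))

end Averages

section MildExistenceFamily

variable {M} {V : ℝ → X → X} {C : X → X} {DA : Set X} {A : X → X}

lemma LocASBounded.exists_eventually_nrm_le (hV : M.LocASBounded V) {s₀ : ℝ} (hs₀ : 0 ≤ s₀)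
    (z : X) : ∃ G : Ω →ₘ[P] ℝ, ∀ᶠ s in 𝓝[≥] s₀, M.nrm (V s z) ≤ G := by
  obtain ⟨η, -, hη⟩ := hV (s₀ + 1) (by linarith)
  exact ⟨η * M.nrm z, mem_of_superset (Icc_mem_nhdsGE (lt_add_one s₀))
    fun s hs => hη s ⟨hs₀.trans hs.1, hs.2⟩ z⟩

namespace IsMildCExistenceFamily

lemma apply_rsmul (hfam : IsMildCExistenceFamily M V C DA A) {s : ℝ} (hs : 0 ≤ s) (c : ℝ)
    (x : X) :
    V s (M.rsmul c x) = M.rsmul c (V s x) :=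
  (hfam.V_hom s hs).2 _ x

lemma isIntegral_rsmul (hfam : IsMildCExistenceFamily M V C DA A) {z : X} {s : ℝ} {y : X}
    (hs : 0 ≤ s) (hy : M.IsIntegral (fun u => V u z) 0 s y) (c : ℝ) :
    M.IsIntegral (fun u => V u (M.rsmul c z)) 0 s (M.rsmul c y) :=
  (hy.rsmul c).congr hs fun _ hu => (hfam.apply_rsmul hu.1 c z).symm

/-- Since `∫₀⁰ = 0` and the additive `A` kills `0`, the defining identity at `s = 0`
forces `C = V 0`. -/
lemma C_eq_V_zero (hfam : IsMildCExistenceFamily M V C DA A)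
    (hA : ∀ z ∈ DA, ∀ w ∈ DA, z + w ∈ DA ∧ A (z + w) = A z + A w) (x : X) :
    C x = V 0 x := by
  obtain ⟨y, hy, hyD, hyA⟩ := hfam.integral_mem x 0 le_rfl
  obtain rfl := hy.eq_zero
  have hA0 : A 0 = 0 := by simpa using (hA 0 hyD 0 hyD).2
  rw [hA0] at hyA
  exact (eq_of_sub_eq_zero hyA.symm).symm

lemma rsmul_integral_mem (hfam : IsMildCExistenceFamily M V C DA A) (hC : ∀ x, C x = V 0 x)
    {z : X} {s : ℝ} {y : X} (hs : 0 ≤ s) (hy : M.IsIntegral (fun u => V u z) 0 s y) (c : ℝ) :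
    M.rsmul c y ∈ DA ∧ A (M.rsmul c y) = M.rsmul c (V s z - V 0 z) := by
  obtain ⟨y', hy', hyD, hyA⟩ := hfam.integral_mem (M.rsmul c z) s hs
  obtain rfl := hy'.unique (hfam.isIntegral_rsmul hs hy c)
  rw [hyA, hC, hfam.apply_rsmul hs, hfam.apply_rsmul le_rfl, M.rsmul_sub]
  exact ⟨hyD, rfl⟩

lemma rsmul_sub_integral_mem (hfam : IsMildCExistenceFamily M V C DA A)
    (hA : ∀ z ∈ DA, ∀ w ∈ DA, z + w ∈ DA ∧ A (z + w) = A z + A w)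
    {z : X} {s₀ s₁ : ℝ} {y₀ y₁ : X} (hs₀ : 0 ≤ s₀) (hs₁ : 0 ≤ s₁)
    (hy₀ : M.IsIntegral (fun u => V u z) 0 s₀ y₀) (hy₁ : M.IsIntegral (fun u => V u z) 0 s₁ y₁)
    (c : ℝ) :
    M.rsmul c (y₁ - y₀) ∈ DA ∧ A (M.rsmul c (y₁ - y₀)) = M.rsmul c (V s₁ z - V s₀ z) := by
  have hC := hfam.C_eq_V_zero hA
  obtain ⟨h₁D, h₁A⟩ := hfam.rsmul_integral_mem hC hs₁ hy₁ c
  obtain ⟨h₀D, h₀A⟩ := hfam.rsmul_integral_mem hC hs₀ hy₀ (-c)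
  have hsplit : M.rsmul c (y₁ - y₀) = M.rsmul c y₁ + M.rsmul (-c) y₀ := by
    rw [M.rsmul_sub, M.neg_rsmul, sub_eq_add_neg]
  obtain ⟨hD, hAdd⟩ := hA _ h₁D _ h₀D
  refine ⟨hsplit ▸ hD, ?_⟩
  rw [hsplit, hAdd, h₁A, h₀A, M.neg_rsmul, M.rsmul_sub, M.rsmul_sub, M.rsmul_sub]
  abel

end IsMildCExistenceFamily

end MildExistenceFamily

end RNModuleStr

/-- if `A` is a closed module homomorphism, `{V(s)}` a mild
`C`-existence family for `A`, and `s ↦ V(s)z` is differentiable at `s₀` with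
derivative `w`, then `V(s₀)z ∈ D(A)` and `A V(s₀)z = w`. -/
theorem stmt13 {Ω : Type*} [MeasurableSpace Ω] (P : Measure Ω) [IsProbabilityMeasure P]
    {X : Type*} [AddCommGroup X] (M : RNModuleStr P X)
    (V : ℝ → X → X) (C : X → X) (DA : Set X) (A : X → X)
    (hclosed : M.IsClosedOperator DA A)
    (hhomA : ∀ z ∈ DA, ∀ w ∈ DA, z + w ∈ DA ∧ A (z + w) = A z + A w)
    (hfam : IsMildCExistenceFamily M V C DA A)
    (z : X) (s₀ : ℝ) (hs₀ : 0 ≤ s₀) (w : X)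
    (hdiff : M.TendstoRN (fun s => M.rsmul (s - s₀)⁻¹ (V s z - V s₀ z))
      (nhdsWithin s₀ (Ici 0 \ {s₀})) w) :
    V s₀ z ∈ DA ∧ A (V s₀ z) = w := by
  obtain ⟨h, p, hpos, hlim, hp⟩ := exists_seq_pos_nat_mul_eq hs₀
  choose y hy _ using fun s (hs : 0 ≤ s) => hfam.integral_mem z s hs
  have hs : ∀ n, 0 ≤ s₀ + h n := fun n => by linarith [hpos n]
  have hu n := hfam.rsmul_sub_integral_mem hhomA hs₀ (hs n) (hy s₀ hs₀) (hy _ (hs n)) (h n)⁻¹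
  refine hclosed _ _ w (fun n => (hu n).1) ?_ ?_
  · obtain ⟨G, hG⟩ := hfam.locBdd.exists_eventually_nrm_le hs₀ z
    refine M.tendstoRN_of_tendstoRN_average hG (M.tendstoRN_mono (hfam.strong_cont z s₀ hs₀)
      (nhdsWithin_mono _ (Ici_subset_Ici.mpr hs₀))) hpos hlim fun n => ?_
    have hy₀ : M.IsIntegral (fun u => V u z) 0 (p n * h n) (y s₀ hs₀) := by
      rw [hp n]; exact hy s₀ hs₀
    have hy₁ : M.IsIntegral (fun u => V u z) 0 ((p n + 1 : ℕ) * h n) (y _ (hs n)) := by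
      rw [Nat.cast_succ, add_mul, one_mul, hp n]; exact hy _ (hs n)
    simpa only [hp n] using IsIntegral.tendstoRN_average (hpos n).ne' hy₀ hy₁
  · have hshift : Tendsto (fun n => s₀ + h n) atTop (nhdsWithin s₀ (Ici 0 \ {s₀})) :=
      tendsto_nhdsWithin_iff.mpr ⟨by simpa using tendsto_const_nhds.add hlim,
        Eventually.of_forall fun n => ⟨hs n, by simpa using (hpos n).ne'⟩⟩
    refine M.tendstoRN_congr (Eventually.of_forall fun n => ?_) (M.tendstoRN_comp hdiff hshift)
    rw [(hu n).2, add_sub_cancel_left]
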